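/- For every integer n ≥ 1, the function f(j) = ∑_{i=0}^{n-1} ( (i+1)/(n+1) · j^i (j-1)^{n-1-i} + (n-i)/(n+1) · (j+1)^i j^{n-1-i} ) is a polynomial in j with f(j) = n·j^{n-1} + O(j^{n-3}); precisely, f(j) - n·j^{n-1} is a polynomial of degree at most n-3 in j. -/

import Mathlib

/-!
Every summand is a monic binomial `X ^ a * (X + c) ^ b` of degree `n - 1`, scaled by a weight;
the two weights of each index add up to `1`, so the leading coefficient of the sum is `n`.
The next coefficient of `X ^ a * (X + c) ^ b` is `b * c`, so index `i` contributes
`((i + 1) * (i + 1 - n) + (n - i) * i) / (n + 1) = (2 * i - (n - 1)) / (n + 1)` to the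
coefficient of `X ^ (n - 2)`, and these contributions are antisymmetric under `i ↦ n - 1 - i`.
-/

open Polynomial Finset

namespace Polynomial

theorem degree_le_sub_two_of_coeff_eq_zero {R : Type*} [Semiring R] {p : R[X]} {N : ℕ}
    (hdeg : p.natDegree ≤ N) (htop : p.coeff N = 0) (hnext : 0 < N → p.coeff (N - 1) = 0) :
    p.degree ≤ (N - 2 : ℕ) := by
  rw [degree_le_iff_coeff_zero]
  intro m hm
  have hm : N - 2 < m := by exact_mod_cast hm
  rcases (show N < m ∨ m = N ∨ (0 < N ∧ m = N - 1) by omega) with h | rfl | ⟨hN, rfl⟩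
  · exact coeff_eq_zero_of_natDegree_lt (hdeg.trans_lt h)
  · exact htop
  · exact hnext hN

section Binomial

variable {R : Type*} [CommRing R] (c : R) {a b N : ℕ}

theorem natDegree_X_pow_mul_X_add_C_pow_le (h : a + b = N) :
    (X ^ a * (X + C c) ^ b).natDegree ≤ N := by
  refine h ▸ natDegree_mul_le.trans (add_le_add (natDegree_X_pow_le a) ?_)
  simpa using natDegree_pow_le_of_le b (natDegree_add_C.trans_le (natDegree_X_le (R := R)))

theorem coeff_X_pow_mul_X_add_C_pow_of_add_eq (h : a + b = N) :
    (X ^ a * (X + C c) ^ b).coeff N = 1 := by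
  rw [coeff_X_pow_mul', if_pos (by omega), coeff_X_add_C_pow, show N - a = b by omega,
    Nat.sub_self, pow_zero, Nat.choose_self, Nat.cast_one, one_mul]

theorem coeff_X_pow_mul_X_add_C_pow_of_add_eq_succ (h : a + b = N + 1) :
    (X ^ a * (X + C c) ^ b).coeff N = b * c := by
  rw [coeff_X_pow_mul']
  split_ifs with ha
  · rw [coeff_X_add_C_pow, show b - (N - a) = 1 by omega, pow_one,
      show N - a = b - 1 by omega, Nat.choose_symm (by omega), Nat.choose_one_right, mul_comm]
  · rw [show b = 0 by omega, Nat.cast_zero, zero_mul]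

end Binomial

end Polynomial

theorem sum_range_two_mul_sub_eq_zero {R : Type*} [CommRing R] (n : ℕ) :
    ∑ i ∈ range n, (2 * (i : R) - (n - 1)) = 0 := by
  induction n with
  | zero => simp
  | succ n ih =>
    rw [sum_range_succ]
    simp only [sum_sub_distrib, sum_const, card_range, nsmul_eq_mul, Nat.cast_succ] at ih ⊢
    linear_combination ih

noncomputable def centerOfMassPoly (n : ℕ) : ℝ[X] :=
  ∑ i ∈ range n,
    (C (((i : ℝ) + 1) / (n + 1)) * (X ^ i * (X + C (-1)) ^ (n - 1 - i)) +
      C (((n : ℝ) - i) / (n + 1)) * (X ^ (n - 1 - i) * (X + C 1) ^ i))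

theorem eval_centerOfMassPoly (n : ℕ) (j : ℝ) :
    (centerOfMassPoly n).eval j =
      ∑ i ∈ range n,
        (((i : ℝ) + 1) / (n + 1) * (j ^ i * (j - 1) ^ (n - 1 - i)) +
          ((n : ℝ) - i) / (n + 1) * ((j + 1) ^ i * j ^ (n - 1 - i))) := by
  simp only [centerOfMassPoly, eval_finsetSum, eval_add, eval_mul, eval_C, eval_pow, eval_X]
  exact sum_congr rfl fun i _ => by ring

theorem natDegree_centerOfMassPoly_le (n : ℕ) : (centerOfMassPoly n).natDegree ≤ n - 1 := by
  refine natDegree_sum_le_of_forall_le _ _ fun i hi => ?_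
  have hi : i < n := mem_range.mp hi
  refine natDegree_add_le_of_degree_le ?_ ?_ <;> refine natDegree_C_mul_le _ _ |>.trans ?_ <;>
    exact natDegree_X_pow_mul_X_add_C_pow_le _ (by omega)

theorem coeff_centerOfMassPoly_top (n : ℕ) : (centerOfMassPoly n).coeff (n - 1) = n := by
  have hterm : ∀ i ∈ range n,
      (((i : ℝ) + 1) / (n + 1) * ((X : ℝ[X]) ^ i * (X + C (-1)) ^ (n - 1 - i)).coeff (n - 1) +
        ((n : ℝ) - i) / (n + 1) * ((X : ℝ[X]) ^ (n - 1 - i) * (X + C 1) ^ i).coeff (n - 1)) =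
        1 := by
    intro i hi
    have hi : i < n := mem_range.mp hi
    rw [coeff_X_pow_mul_X_add_C_pow_of_add_eq _ (by omega),
      coeff_X_pow_mul_X_add_C_pow_of_add_eq _ (by omega)]
    field_simp
    ring
  simp only [centerOfMassPoly, finsetSum_coeff, coeff_add, coeff_C_mul]
  rw [sum_congr rfl hterm, sum_const, card_range, nsmul_one]

theorem coeff_centerOfMassPoly_next {n : ℕ} (hn : 2 ≤ n) :
    (centerOfMassPoly n).coeff (n - 2) = 0 := by
  have hterm : ∀ i ∈ range n,
      (((i : ℝ) + 1) / (n + 1) * ((X : ℝ[X]) ^ i * (X + C (-1)) ^ (n - 1 - i)).coeff (n - 2) +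
        ((n : ℝ) - i) / (n + 1) * ((X : ℝ[X]) ^ (n - 1 - i) * (X + C 1) ^ i).coeff (n - 2)) =
        (2 * i - (n - 1)) / (n + 1) := by
    intro i hi
    have hi : i < n := mem_range.mp hi
    rw [coeff_X_pow_mul_X_add_C_pow_of_add_eq_succ _ (by omega),
      coeff_X_pow_mul_X_add_C_pow_of_add_eq_succ _ (by omega),
      Nat.cast_sub (by omega : i ≤ n - 1), Nat.cast_sub (by omega : 1 ≤ n)]
    field_simp
    ring
  simp only [centerOfMassPoly, finsetSum_coeff, coeff_add, coeff_C_mul]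
  rw [sum_congr rfl hterm, ← sum_div, sum_range_two_mul_sub_eq_zero, zero_div]

theorem stmt_8_general (n : ℕ) :
    ∃ p : Polynomial ℝ, p.degree ≤ (n - 3 : ℕ) ∧
      ∀ j : ℝ,
        (∑ i ∈ Finset.range n,
            (((i : ℝ) + 1) / (n + 1) * (j ^ i * (j - 1) ^ (n - 1 - i)) +
              ((n : ℝ) - i) / (n + 1) * ((j + 1) ^ i * j ^ (n - 1 - i)))) =
          n * j ^ (n - 1) + p.eval j := by
  refine ⟨centerOfMassPoly n - C (n : ℝ) * X ^ (n - 1), ?_, fun j => ?_⟩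
  · have hdeg : (centerOfMassPoly n - C (n : ℝ) * X ^ (n - 1)).natDegree ≤ n - 1 :=
      (natDegree_sub_le _ _).trans <| max_le (natDegree_centerOfMassPoly_le n)
        ((natDegree_C_mul_le _ _).trans (natDegree_X_pow_le _))
    have htop : (centerOfMassPoly n - C (n : ℝ) * X ^ (n - 1)).coeff (n - 1) = 0 := by
      rw [coeff_sub, coeff_centerOfMassPoly_top, coeff_C_mul_X_pow, if_pos rfl, sub_self]
    have hnext : 0 < n - 1 →
        (centerOfMassPoly n - C (n : ℝ) * X ^ (n - 1)).coeff (n - 1 - 1) = 0 := fun h => by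
      rw [coeff_sub, Nat.sub_sub, coeff_centerOfMassPoly_next (by omega), coeff_C_mul_X_pow,
        if_neg (by omega), sub_zero]
    simpa only [Nat.sub_sub] using degree_le_sub_two_of_coeff_eq_zero hdeg htop hnext
  · rw [eval_sub, eval_centerOfMassPoly, eval_mul, eval_C, eval_pow, eval_X]
    ring

theorem stmt_8 (n : ℕ) (hn : 1 ≤ n) :
    ∃ p : Polynomial ℝ, p.degree ≤ (n - 3 : ℕ) ∧
      ∀ j : ℝ,
        (∑ i ∈ Finset.range n,
            (((i : ℝ) + 1) / (n + 1) * (j ^ i * (j - 1) ^ (n - 1 - i)) +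
              ((n : ℝ) - i) / (n + 1) * ((j + 1) ^ i * j ^ (n - 1 - i)))) =
          n * j ^ (n - 1) + p.eval j :=
  stmt_8_general n
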